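/- arXiv:2203.06554 — 3 statements merged into one kernel-verified Lean document; each statement's English description precedes it below -/
import Mathlib

section
/- Let {M_{sp}}_{(s,p)∈S×P} be a POVM on ℂ^d and set M_p := ∑_{s∈S} M_{sp}. Then the following two conditions are equivalent. (A) There exist a finite index set Λ and nonzero pairwise-orthogonal orthogonal projections {P_λ}_{λ∈Λ} on ℂ^d with ∑_{λ∈Λ} P_λ = 𝟙 such that (1) every M_{sp} is block diagonal along the decomposition, i.e. P_λ·M_{sp} = M_{sp}·P_λ for all (s,p) ∈ S×P and λ ∈ Λ, and (2) for every p ∈ P and λ ∈ Λ there is a constant c_{p,λ} ∈ [0,1] with P_λ·M_p·P_λ = c_{p,λ}·P_λ. (B) M_{sp}·M_{p'} = M_{p'}·M_{sp} for all s ∈ S and all p, p' ∈ P. -/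
/-!
If the `P`-marginals `M_p` of the POVM commute with every `M_{sp}`, they in particular commute
with each other, so they are commuting self-adjoint matrices with spectrum in `[0, 1]`. Their
joint spectral projections `∏_p E_p(γ_p)` (with `E_p(μ)` the spectral projection of `M_p` at `μ`)
form a complete family of orthogonal projections on whose ranges every `M_p` acts as the scalar
`γ_p`; as functions of the `M_p` they commute with everything commuting with all `M_p`, in
particular with every `M_{sp}`. Discarding the zero ones gives (A). Conversely, under (A) each
`M_p = ∑_λ P_λ M_p P_λ = ∑_λ c_{p,λ} P_λ` lies in the span of projections commuting with `M_{sp}`.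
-/

open scoped ComplexOrder

namespace CompleteOrthogonalIdempotents

variable {R ι : Type*} [Fintype ι] {e : ι → R}

theorem sum_mul_mul_self_of_commute [Semiring R] (he : CompleteOrthogonalIdempotents e) {y : R}
    (hy : ∀ i, Commute (e i) y) : ∑ i, e i * y * e i = y := by
  calc ∑ i, e i * y * e i = ∑ i, e i * y := by
        refine Finset.sum_congr rfl fun i _ => ?_
        rw [mul_assoc, ← (hy i).eq, ← mul_assoc, (he.idem i).eq]
    _ = y := by rw [← Finset.sum_mul, he.complete, one_mul]

theorem commute_of_mul_mul_self_eq_smul {K : Type*} [CommSemiring K] [Semiring R] [Algebra K R]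
    (he : CompleteOrthogonalIdempotents e) {x y : R} {c : ι → K} (hx : ∀ i, Commute (e i) x)
    (hy : ∀ i, Commute (e i) y) (hc : ∀ i, e i * y * e i = c i • e i) : Commute x y := by
  rw [← he.sum_mul_mul_self_of_commute hy, Finset.sum_congr rfl fun i _ => hc i]
  exact Commute.sum_right _ _ _ fun i _ => ((hx i).symm.smul_right (c i))

theorem exists_fin_ne_zero [Semiring R] (he : CompleteOrthogonalIdempotents e) :
    ∃ (k : ℕ) (f : Fin k → R), (∀ l, f l ≠ 0) ∧ CompleteOrthogonalIdempotents f ∧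
      ∀ l, ∃ i, f l = e i := by
  classical
  let J := {i // e i ≠ 0}
  have hJ : CompleteOrthogonalIdempotents (fun j : J => e j) :=
    ⟨he.embedding (Function.Embedding.subtype _), by
      rw [← Finset.sum_subtype {i | e i ≠ 0} (by simp), Finset.sum_filter_ne_zero, he.complete]⟩
  let σ := (Fintype.equivFin J).symm
  exact ⟨Fintype.card J, fun l => e (σ l), fun l => (σ l).2,
    (CompleteOrthogonalIdempotents.equiv σ).mpr hJ, fun l => ⟨σ l, rfl⟩⟩

theorem pi_prod [CommSemiring R] {P : Type*} [Fintype P] {ι : P → Type*} [∀ p, Fintype (ι p)]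
    [DecidableEq P] {e : ∀ p, ι p → R} (he : ∀ p, CompleteOrthogonalIdempotents (e p)) :
    CompleteOrthogonalIdempotents (fun γ : ∀ p, ι p => ∏ p, e p (γ p)) where
  idem γ := by
    rw [IsIdempotentElem, ← Finset.prod_mul_distrib]
    exact Finset.prod_congr rfl fun p _ => (he p).idem (γ p)
  ortho γ γ' hne := by
    obtain ⟨p, hp⟩ := Function.ne_iff.mp hne
    rw [← Finset.prod_mul_distrib]
    exact Finset.prod_eq_zero (Finset.mem_univ p) ((he p).ortho hp)
  complete := by
    rw [← Fintype.prod_sum]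
    exact Finset.prod_eq_one fun p _ => (he p).complete

end CompleteOrthogonalIdempotents

theorem Finset.prod_mul_self_of_isIdempotentElem {M P : Type*} [CommMonoid M] [Fintype P]
    (f : P → M) {p : P} (hp : IsIdempotentElem (f p)) : (∏ q, f q) * f p = ∏ q, f q := by
  classical
  rw [← Finset.mul_prod_erase _ f (Finset.mem_univ p), mul_right_comm, hp.eq]

section SpectralProjection

variable {A : Type*} [Ring A] [StarRing A] [Algebra ℝ A] [TopologicalSpace A]
  [ContinuousFunctionalCalculus ℝ A IsSelfAdjoint]

noncomputable def spectralProj (a : A) (μ : ℝ) : A := cfc (Set.indicator {μ} 1) a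

theorem isSelfAdjoint_spectralProj (a : A) (μ : ℝ) : IsSelfAdjoint (spectralProj a μ) :=
  cfc_predicate _ a

theorem Commute.spectralProj_left [IsTopologicalRing A] [T2Space A] {a b : A}
    (h : Commute a b) (μ : ℝ) : Commute (spectralProj a μ) b :=
  h.cfc_real _

theorem spectralProj_mul_self_eq_smul {a : A} (ha : IsSelfAdjoint a)
    (hfin : (spectrum ℝ a).Finite) (μ : ℝ) : spectralProj a μ * a = μ • spectralProj a μ := by
  have hcont : ∀ f : ℝ → ℝ, ContinuousOn f (spectrum ℝ a) := fun f => hfin.continuousOn f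
  nth_rw 2 [← cfc_id' ℝ a]
  rw [spectralProj, ← cfc_mul _ _ a (hcont _) (hcont _), ← cfc_smul μ _ a (hcont _)]
  refine cfc_congr fun x _ => ?_
  by_cases hx : x = μ <;> simp [hx]

theorem completeOrthogonalIdempotents_spectralProj {a : A} (ha : IsSelfAdjoint a) {s : Finset ℝ}
    (hs : spectrum ℝ a ⊆ s) : CompleteOrthogonalIdempotents (fun μ : s => spectralProj a μ) := by
  have hcont : ∀ f : ℝ → ℝ, ContinuousOn f (spectrum ℝ a) :=
    fun f => (s.finite_toSet.subset hs).continuousOn f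
  refine ⟨⟨fun μ => ?_, fun μ ν hμν => ?_⟩, ?_⟩
  · rw [IsIdempotentElem, spectralProj, ← cfc_mul _ _ a (hcont _) (hcont _)]
    congr 1
    ext x
    by_cases hx : x = μ <;> simp [hx]
  · simp only [spectralProj]
    rw [← cfc_mul _ _ a (hcont _) (hcont _)]
    convert cfc_zero ℝ a using 2
    funext x
    by_cases hx : x = μ <;> simp [hx, Subtype.coe_ne_coe.mpr hμν]
  · simp only [spectralProj]
    rw [← cfc_sum_univ _ a fun _ => hcont _, ← cfc_one ℝ a]
    refine cfc_congr fun x hx => ?_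
    rw [Finset.sum_apply, Finset.sum_coe_sort s fun μ => Set.indicator {μ} (1 : ℝ → ℝ) x]
    simpa [Set.indicator_apply] using hs hx

end SpectralProjection

section JointSpectralDecomposition

variable {A : Type*} [Ring A] [StarRing A] [Algebra ℝ A] [TopologicalSpace A]
  [ContinuousFunctionalCalculus ℝ A IsSelfAdjoint] [IsTopologicalRing A] [T2Space A]

open scoped IsMulCommutative in
theorem exists_jointSpectralDecomposition {P : Type*} [Fintype P] {a : P → A}
    (ha : ∀ p, IsSelfAdjoint (a p)) (hcomm : ∀ p q, Commute (a p) (a q))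
    (hfin : ∀ p, (spectrum ℝ (a p)).Finite) :
    ∃ (k : ℕ) (e : Fin k → A), (∀ l, e l ≠ 0) ∧ CompleteOrthogonalIdempotents e ∧
      (∀ l, IsSelfAdjoint (e l)) ∧ (∀ l b, (∀ p, Commute (a p) b) → Commute (e l) b) ∧
      ∀ l p, ∃ μ ∈ spectrum ℝ (a p), e l * a p = μ • e l := by
  classical
  -- The products of spectral projections are formed in the commutative algebra they generate,
  -- which lies in the bicommutant of the family `a`.
  let gens := Set.range fun x : P × ℝ => spectralProj (a x.1) x.2
  let B := Algebra.adjoin ℝ gens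
  have : IsMulCommutative B := Algebra.isMulCommutative_adjoin ℝ (by
    rintro _ ⟨⟨p, μ⟩, rfl⟩ _ ⟨⟨q, ν⟩, rfl⟩
    exact (((hcomm q p).spectralProj_left ν).symm.spectralProj_left μ).eq)
  let E (p : P) (μ : (hfin p).toFinset) : B :=
    ⟨spectralProj (a p) μ, Algebra.subset_adjoin ⟨(p, μ), rfl⟩⟩
  have hE : ∀ p, CompleteOrthogonalIdempotents (E p) := fun p =>
    (CompleteOrthogonalIdempotents.map_injective_iff B.val.toRingHom Subtype.val_injective).mp
      (completeOrthogonalIdempotents_spectralProj (ha p) (by simp))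
  let Q (γ : ∀ p, (hfin p).toFinset) : A := ((∏ p, E p (γ p) : B) : A)
  have hQ : CompleteOrthogonalIdempotents Q :=
    (CompleteOrthogonalIdempotents.pi_prod hE).map B.val.toRingHom
  obtain ⟨k, e, hne, he, hsub⟩ := hQ.exists_fin_ne_zero
  refine ⟨k, e, hne, he, fun l => ?_, fun l b hb => ?_, fun l p => ?_⟩ <;>
    obtain ⟨γ, hγ⟩ := hsub l <;> rw [hγ]
  · refine Finset.prod_induction _ (fun x : B => IsSelfAdjoint (x : A))
      (fun x y hx hy => ?_) (.one A) fun p _ => isSelfAdjoint_spectralProj _ _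
    exact (hx.commute_iff hy).mp (congrArg Subtype.val (mul_comm x y))
  · have hbc : b ∈ Subalgebra.centralizer ℝ gens := by
      rintro _ ⟨⟨p, μ⟩, rfl⟩
      exact ((hb p).spectralProj_left μ).eq
    exact (Algebra.adjoin_le_centralizer_centralizer ℝ gens (∏ p, E p (γ p)).2 b hbc).symm
  · refine ⟨γ p, (hfin p).mem_toFinset.mp (γ p).2, ?_⟩
    have habsorb : Q γ * spectralProj (a p) (γ p) = Q γ := congrArg Subtype.val
      (Finset.prod_mul_self_of_isIdempotentElem (fun q => E q (γ q)) ((hE p).idem (γ p)))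
    rw [← habsorb, mul_assoc, spectralProj_mul_self_eq_smul (ha p) (hfin p), mul_smul_comm]

end JointSpectralDecomposition

namespace Matrix

variable {𝕜 n : Type*} [RCLike 𝕜] [DecidableEq n] {A : Matrix n n 𝕜}

theorem PosSemidef.nonneg_of_mem_spectrum_real [Fintype n] (hA : A.PosSemidef) {μ : ℝ}
    (hμ : μ ∈ spectrum ℝ A) : 0 ≤ μ := by
  obtain ⟨i, rfl⟩ := hA.isHermitian.spectrum_real_eq_range_eigenvalues ▸ hμ
  exact hA.eigenvalues_nonneg i

theorem PosSemidef.spectrum_real_subset_Icc [Fintype n] (hA : A.PosSemidef)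
    (h₁ : (1 - A).PosSemidef) : spectrum ℝ A ⊆ Set.Icc 0 1 := fun μ hμ => by
  have h : 1 - μ ∈ spectrum ℝ (1 - A) := by
    rw [← map_one (algebraMap ℝ (Matrix n n 𝕜)), ← spectrum.singleton_sub_eq]
    exact Set.sub_mem_sub rfl hμ
  exact ⟨hA.nonneg_of_mem_spectrum_real hμ, sub_nonneg.mp (h₁.nonneg_of_mem_spectrum_real h)⟩

theorem posSemidef_one_sub_of_sum_eq_one {ι : Type*} [Fintype ι] {B : ι → Matrix n n 𝕜}
    (hB : ∀ i, (B i).PosSemidef) (h : ∑ i, B i = 1) (i : ι) : (1 - B i).PosSemidef := by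
  classical
  rw [← h, ← Finset.add_sum_erase _ _ (Finset.mem_univ i), add_sub_cancel_left]
  exact posSemidef_sum _ fun j _ => hB j

end Matrix

theorem stmt_0_general {d : ℕ} {S P : Type*}
    [Fintype S] [Fintype P]
    (M : S → P → Matrix (Fin d) (Fin d) ℂ)
    (hMpsd : ∀ s p, (M s p).PosSemidef)
    (hMsum : ∑ s : S, ∑ p : P, M s p = 1) :
    (∃ (k : ℕ) (Pr : Fin k → Matrix (Fin d) (Fin d) ℂ),
        (∀ l, Pr l ≠ 0) ∧
        (∀ l, (Pr l).IsHermitian) ∧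
        (∀ l, Pr l * Pr l = Pr l) ∧
        (∀ l l', l ≠ l' → Pr l * Pr l' = 0) ∧
        (∑ l, Pr l = 1) ∧
        (∀ s p l, Pr l * M s p = M s p * Pr l) ∧
        (∀ p l, ∃ c : ℝ, 0 ≤ c ∧ c ≤ 1 ∧
          Pr l * (∑ s : S, M s p) * Pr l = (c : ℂ) • Pr l)) ↔
      (∀ (s : S) (p p' : P),
        M s p * (∑ s' : S, M s' p') = (∑ s' : S, M s' p') * M s p) := by
  constructor
  · rintro ⟨k, Pr, -, -, hidem, horth, hsum, hcomm, hcompr⟩ s p p'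
    choose c _ _ hc using hcompr p'
    exact CompleteOrthogonalIdempotents.commute_of_mul_mul_self_eq_smul
      ⟨⟨hidem, fun l l' => horth l l'⟩, hsum⟩ (c := fun l => (c l : ℂ)) (hcomm s p)
      (fun l => Commute.sum_right _ _ _ fun s' _ => hcomm s' p' l) hc
  · intro hB
    have hMp : ∀ p, (∑ s, M s p).PosSemidef := fun p =>
      Matrix.posSemidef_sum _ fun s _ => hMpsd s p
    have hMp_le : ∀ p, spectrum ℝ (∑ s, M s p) ⊆ Set.Icc 0 1 := fun p =>
      (hMp p).spectrum_real_subset_Icc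
        (Matrix.posSemidef_one_sub_of_sum_eq_one hMp (by rw [Finset.sum_comm, hMsum]) p)
    obtain ⟨k, e, hne, he, hsa, hcomm, heig⟩ := exists_jointSpectralDecomposition
      (fun p => (hMp p).isHermitian.isSelfAdjoint)
      (fun p q => Commute.sum_left _ _ _ fun s _ => hB s p q) fun _ => Matrix.finite_real_spectrum
    refine ⟨k, e, hne, hsa, he.idem, fun _ _ h => he.ortho h, he.complete,
      fun s p l => (hcomm l (M s p) fun q => (hB s p q).symm).eq, fun p l => ?_⟩
    obtain ⟨μ, hμ, h⟩ := heig l p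
    refine ⟨μ, (hMp_le p hμ).1, (hMp_le p hμ).2, ?_⟩
    rw [h, smul_mul_assoc, (he.idem l).eq, Complex.coe_smul]

/-- For a POVM `{M s p}` on `ℂ^d`, with `M_p := ∑ s, M s p`, the existence of a
finite family of nonzero pairwise-orthogonal orthogonal projections summing to the identity,
commuting with every `M s p`, and compressing every `M_p` to a scalar multiple of the projection,
is equivalent to the commutation relations `M_{sp} · M_{p'} = M_{p'} · M_{sp}`. -/
theorem stmt_0 {d : ℕ} (hd : 1 ≤ d) {S P : Type*}
    [Fintype S] [Nonempty S] [Fintype P] [Nonempty P]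
    (M : S → P → Matrix (Fin d) (Fin d) ℂ)
    (hMpsd : ∀ s p, (M s p).PosSemidef)
    (hMsum : ∑ s : S, ∑ p : P, M s p = 1) :
    (∃ (k : ℕ) (Pr : Fin k → Matrix (Fin d) (Fin d) ℂ),
        (∀ l, Pr l ≠ 0) ∧
        (∀ l, (Pr l).IsHermitian) ∧
        (∀ l, Pr l * Pr l = Pr l) ∧
        (∀ l l', l ≠ l' → Pr l * Pr l' = 0) ∧
        (∑ l, Pr l = 1) ∧
        (∀ s p l, Pr l * M s p = M s p * Pr l) ∧
        (∀ p l, ∃ c : ℝ, 0 ≤ c ∧ c ≤ 1 ∧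
          Pr l * (∑ s : S, M s p) * Pr l = (c : ℂ) • Pr l)) ↔
      (∀ (s : S) (p p' : P),
        M s p * (∑ s' : S, M s' p') = (∑ s' : S, M s' p') * M s p) :=
  stmt_0_general M hMpsd hMsum
end

section
/- For every ε ∈ [0,1] and every positive semidefinite matrix ρ on ℂ^d, Tr(ρ·∇W_ε(ρ)) = W_ε(ρ); in other words, the scalar W_ε(ρ) − Tr(∇W_ε(ρ)·ρ) appearing as the constant term of the linearization operator O_ε := (W_ε(ρ) − Tr[∇W_ε(ρ)·ρ])·𝟙 + ∇W_ε(ρ) always vanishes. -/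
open Matrix
open scoped Kronecker Classical ComplexOrder

/-- Von Neumann entropy (base-2) of a matrix, defined via its eigenvalues when it is Hermitian
(with the convention `0 · log₂ 0 = 0`), and `0` otherwise. -/
noncomputable def entH {n : Type*} [Fintype n] [DecidableEq n] (A : Matrix n n ℂ) : ℝ :=
  if h : A.IsHermitian then -∑ i, h.eigenvalues i * Real.logb 2 (h.eigenvalues i) else 0

/-- The positive semidefinite square root of a positive semidefinite matrix
(junk value `0` on non-PSD input). -/
noncomputable def msqrt {n : Type*} [Fintype n] [DecidableEq n] (A : Matrix n n ℂ) :
    Matrix n n ℂ :=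
  if h : A.PosSemidef then
    (h.1.eigenvectorUnitary : Matrix n n ℂ) *
      Matrix.diagonal ((↑) ∘ (fun x : ℝ => Real.sqrt x) ∘ h.1.eigenvalues) *
      (star h.1.eigenvectorUnitary : Matrix n n ℂ)
  else 0

/-- The objective function
`W(ρ) = ∑_{s,p} H(K_{sp} ρ K_{sp}) − ∑_p H(K_p ρ K_p)` with `K_{sp} = √(M s p)` and
`K_p = √(∑_s M s p)`. -/
noncomputable def objW {n : Type*} [Fintype n] [DecidableEq n] {S P : Type*}
    [Fintype S] [Fintype P]
    (M : S → P → Matrix n n ℂ) (ρ : Matrix n n ℂ) : ℝ :=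
  (∑ s : S, ∑ p : P, entH (msqrt (M s p) * ρ * msqrt (M s p))) -
    ∑ p : P, entH (msqrt (∑ s : S, M s p) * ρ * msqrt (∑ s : S, M s p))

/-- Functional calculus for Hermitian matrices: apply `f` to the eigenvalues. Returns `0` on
non-Hermitian input. -/
noncomputable def herFun {n : Type*} [Fintype n] [DecidableEq n] (f : ℝ → ℝ)
    (A : Matrix n n ℂ) : Matrix n n ℂ :=
  if h : A.IsHermitian then
    (h.eigenvectorUnitary : Matrix n n ℂ) *
      Matrix.diagonal (fun i => (f (h.eigenvalues i) : ℂ)) *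
      ((h.eigenvectorUnitary : Matrix n n ℂ))ᴴ
  else 0

/-- Base-2 matrix logarithm on the support of a Hermitian matrix (`log₂ 0 := 0`). -/
noncomputable def matLog2 {n : Type*} [Fintype n] [DecidableEq n] (A : Matrix n n ℂ) :
    Matrix n n ℂ :=
  herFun (Real.logb 2) A

/-- The depolarizing map `D_ε(X) = (1−ε)·X + ε·Tr(X)·𝟙/d` (also its adjoint `D*_ε`). -/
noncomputable def depol {n : Type*} [Fintype n] [DecidableEq n] (ε : ℝ)
    (A : Matrix n n ℂ) : Matrix n n ℂ :=
  ((1 - ε : ℝ) : ℂ) • A + ((ε : ℂ) * A.trace / (Fintype.card n : ℂ)) • (1 : Matrix n n ℂ)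

/-- The perturbed objective function
`W_ε(ρ) = ∑_{s,p} H(D_ε(K_{sp} ρ K_{sp})) − ∑_p H(D_ε(K_p ρ K_p))`. -/
noncomputable def objWpert {n : Type*} [Fintype n] [DecidableEq n] {S P : Type*}
    [Fintype S] [Fintype P] (ε : ℝ)
    (M : S → P → Matrix n n ℂ) (ρ : Matrix n n ℂ) : ℝ :=
  (∑ s : S, ∑ p : P, entH (depol ε (msqrt (M s p) * ρ * msqrt (M s p)))) -
    ∑ p : P, entH (depol ε (msqrt (∑ s : S, M s p) * ρ * msqrt (∑ s : S, M s p)))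

/-- The gradient of the perturbed objective function:
`∇W_ε(ρ) = −∑_{s,p} K_{sp}·D*_ε(log₂ D_ε(K_{sp} ρ K_{sp}))·K_{sp}
           + ∑_p K_p·D*_ε(log₂ D_ε(K_p ρ K_p))·K_p`. -/
noncomputable def gradWpert {n : Type*} [Fintype n] [DecidableEq n] {S P : Type*}
    [Fintype S] [Fintype P] (ε : ℝ)
    (M : S → P → Matrix n n ℂ) (ρ : Matrix n n ℂ) : Matrix n n ℂ :=
  -(∑ s : S, ∑ p : P,
      msqrt (M s p) * depol ε (matLog2 (depol ε (msqrt (M s p) * ρ * msqrt (M s p)))) *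
        msqrt (M s p)) +
    ∑ p : P,
      msqrt (∑ s : S, M s p) *
        depol ε (matLog2 (depol ε (msqrt (∑ s : S, M s p) * ρ * msqrt (∑ s : S, M s p)))) *
        msqrt (∑ s : S, M s p)

/-! Every summand of `∇W_ε` pairs with `ρ` to minus the entropy of the matching summand of `W_ε`:
by cyclicity of the trace `Tr(ρ · K D*_ε(L) K) = Tr(KρK · D*_ε(L))`, the depolarizing map is
self-dual for the trace pairing, so this is `Tr(A · log₂ A)` with `A = D_ε(KρK)` Hermitian, and
in an eigenbasis of `A` that is `∑ λᵢ log₂ λᵢ = −H(A)`. -/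

section

variable {n : Type*} [Fintype n] [DecidableEq n]

lemma trace_conjStarAlgAut (U : unitary (Matrix n n ℂ)) (X : Matrix n n ℂ) :
    (Unitary.conjStarAlgAut ℂ _ U X).trace = X.trace := by
  rw [Unitary.conjStarAlgAut_apply, trace_mul_cycle, Unitary.coe_star_mul_self, Matrix.one_mul]

lemma trace_mul_herFun (f : ℝ → ℝ) {A : Matrix n n ℂ} (hA : A.IsHermitian) :
    (A * herFun f A).trace = ∑ i, (hA.eigenvalues i : ℂ) * f (hA.eigenvalues i) := by
  have hf : herFun f A = Unitary.conjStarAlgAut ℂ _ hA.eigenvectorUnitary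
      (diagonal fun i => (f (hA.eigenvalues i) : ℂ)) := by
    rw [herFun, dif_pos hA, Unitary.conjStarAlgAut_apply]; rfl
  rw [hf]
  nth_rw 1 [hA.spectral_theorem]
  rw [← map_mul, trace_conjStarAlgAut, diagonal_mul_diagonal, trace_diagonal]
  rfl

lemma trace_mul_matLog2 {A : Matrix n n ℂ} (hA : A.IsHermitian) :
    (A * matLog2 A).trace = -(entH A : ℂ) := by
  rw [matLog2, trace_mul_herFun _ hA, entH, dif_pos hA]
  push_cast
  simp

lemma isHermitian_depol (ε : ℝ) {A : Matrix n n ℂ} (hA : A.IsHermitian) :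
    (depol ε A).IsHermitian := by
  have htr : star A.trace = A.trace := by rw [← trace_conjTranspose, hA.eq]
  simp [Matrix.IsHermitian, depol, hA.eq, htr]

lemma trace_mul_depol (ε : ℝ) (X Y : Matrix n n ℂ) :
    (X * depol ε Y).trace = (depol ε X * Y).trace := by
  simp only [depol, Matrix.mul_add, Matrix.add_mul, trace_add, Matrix.mul_smul,
    Matrix.smul_mul, trace_smul, Matrix.mul_one, Matrix.one_mul, smul_eq_mul]
  ring

lemma isHermitian_msqrt {A : Matrix n n ℂ} (hA : A.PosSemidef) : (msqrt A).IsHermitian := by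
  rw [msqrt, dif_pos hA]
  exact isHermitian_mul_mul_conjTranspose _
    (isHermitian_diagonal_of_self_adjoint _ (funext fun i => Complex.conj_ofReal _))

lemma trace_mul_conj_depol_matLog2 (ε : ℝ) {ρ K : Matrix n n ℂ} (hρ : ρ.IsHermitian)
    (hK : K.IsHermitian) :
    (ρ * (K * depol ε (matLog2 (depol ε (K * ρ * K))) * K)).trace
      = -(entH (depol ε (K * ρ * K)) : ℂ) := by
  have hKρK : (K * ρ * K).IsHermitian := by
    simpa [hK.eq, Matrix.mul_assoc] using isHermitian_mul_mul_conjTranspose K hρ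
  calc (ρ * (K * depol ε (matLog2 (depol ε (K * ρ * K))) * K)).trace
      = (K * ρ * K * depol ε (matLog2 (depol ε (K * ρ * K)))).trace := by
        rw [← Matrix.mul_assoc, ← Matrix.mul_assoc, trace_mul_cycle, ← Matrix.mul_assoc]
    _ = (depol ε (K * ρ * K) * matLog2 (depol ε (K * ρ * K))).trace := trace_mul_depol ..
    _ = -(entH (depol ε (K * ρ * K)) : ℂ) := trace_mul_matLog2 (isHermitian_depol ε hKρK)

end

theorem stmt_7_general {d : ℕ} {S P : Type*}
    [Fintype S] [Fintype P]
    (M : S → P → Matrix (Fin d) (Fin d) ℂ)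
    (hMpsd : ∀ s p, (M s p).PosSemidef)
    (ε : ℝ)
    (ρ : Matrix (Fin d) (Fin d) ℂ) (hρ : ρ.PosSemidef) :
    (ρ * gradWpert ε M ρ).trace = (objWpert ε M ρ : ℂ) := by
  have hK : ∀ p, (msqrt (∑ s, M s p)).IsHermitian := fun p =>
    isHermitian_msqrt (posSemidef_sum _ fun s _ => hMpsd s p)
  simp only [gradWpert, objWpert, Matrix.mul_add, Matrix.mul_neg, Finset.mul_sum, trace_add,
    trace_neg, trace_sum,
    trace_mul_conj_depol_matLog2 ε hρ.isHermitian (isHermitian_msqrt (hMpsd _ _)),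
    trace_mul_conj_depol_matLog2 ε hρ.isHermitian (hK _)]
  push_cast
  simp only [Finset.sum_neg_distrib, neg_neg]
  ring

/-- the constant term of the linearization always vanishes:
`Tr(ρ · ∇W_ε(ρ)) = W_ε(ρ)`. -/
theorem stmt_7 {d : ℕ} (hd : 1 ≤ d) {S P : Type*}
    [Fintype S] [Nonempty S] [Fintype P] [Nonempty P]
    (M : S → P → Matrix (Fin d) (Fin d) ℂ)
    (hMpsd : ∀ s p, (M s p).PosSemidef)
    (hMsum : ∑ s : S, ∑ p : P, M s p = 1)
    (ε : ℝ) (hε : ε ∈ Set.Icc (0 : ℝ) 1)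
    (ρ : Matrix (Fin d) (Fin d) ℂ) (hρ : ρ.PosSemidef) :
    (ρ * gradWpert ε M ρ).trace = (objWpert ε M ρ : ℂ) :=
  stmt_7_general M hMpsd ε ρ hρ
end

section
/- Let c_0 ≥ 0, c_1 > 0, and let X be a finite nonempty set. Define E : ℝ^X → ℝ∪{+∞} by E(λ) := −√(c_0² − ‖λ‖₁²/(4c_1²)) if ∑_{x∈X} λ(x) = 0 and ‖λ‖₁ ≤ 2·c_0·c_1, and E(λ) := +∞ otherwise, where ‖λ‖₁ := ∑_{x∈X} |λ(x)|. Then E is convex, and its Fenchel conjugate satisfies E*(f) = c_0·√(1 + c_1²·(max_{x∈X} f(x) − min_{x∈X} f(x))²) for every f ∈ ℝ^X; equivalently, sup{ ⟨λ, f⟩ + √(c_0² − ‖λ‖₁²/(4c_1²)) : λ ∈ ℝ^X, ∑_x λ(x) = 0, ‖λ‖₁ ≤ 2·c_0·c_1 } = c_0·√(1 + c_1²·(max f − min f)²). -/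
/-!
`E` is the composition of the concave, decreasing semicircle `u ↦ √(c₀² − u²)` on `[0, c₀]` with
the convex map `λ ↦ ‖λ‖₁ / (2c₁)`, hence convex. For the conjugate, `∑ λ = 0` lets one centre `f`
between its extreme values, so `⟨λ, f⟩ ≤ ‖λ‖₁ (max f − min f) / 2`. With `u = ‖λ‖₁ / (2c₁)` and
`α = c₁ (max f − min f)` the objective is at most `α u + √(c₀² − u²) ≤ c₀ √(1 + α²)` by
Cauchy–Schwarz, with equality at `u = c₀ α / √(1 + α²)`, which is realised by a multiple of
`δ_argmax − δ_argmin`.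
-/

open Finset Set

theorem concaveOn_sqrt_sq_sub_sq (c : ℝ) :
    ConcaveOn ℝ (Icc (-c) c) (fun u => √(c ^ 2 - u ^ 2)) := by
  refine ⟨convex_Icc _ _, fun u hu v hv a b ha hb hab => ?_⟩
  simp only [smul_eq_mul]
  have hp := Real.sq_sqrt (sub_nonneg.2 (sq_le_sq' hu.1 hu.2))
  have hq := Real.sq_sqrt (sub_nonneg.2 (sq_le_sq' hv.1 hv.2))
  set p := √(c ^ 2 - u ^ 2)
  set q := √(c ^ 2 - v ^ 2)
  apply Real.le_sqrt_of_sq_le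
  -- `(p, u)` and `(q, v)` lie on the circle of radius `c`, so their convex combination lies in
  -- the disc.
  have hgap : c ^ 2 - (a * u + b * v) ^ 2 - (a * p + b * q) ^ 2
      = a * b * ((p - q) ^ 2 + (u - v) ^ 2) := by
    linear_combination (-(a ^ 2 + a * b)) * hp - (b ^ 2 + a * b) * hq - c ^ 2 * (a + b + 1) * hab
  linarith [mul_nonneg (mul_nonneg ha hb) (add_nonneg (sq_nonneg (p - q)) (sq_nonneg (u - v)))]

theorem antitoneOn_sqrt_sq_sub_sq (c : ℝ) : AntitoneOn (fun u => √(c ^ 2 - u ^ 2)) (Ici 0) :=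
  fun u hu v _ huv => Real.sqrt_le_sqrt (by gcongr)

theorem mul_add_sqrt_sq_sub_sq_le (α : ℝ) {c u : ℝ} (hc : 0 ≤ c) (hu : u ^ 2 ≤ c ^ 2) :
    α * u + √(c ^ 2 - u ^ 2) ≤ c * √(1 + α ^ 2) := by
  have hp := Real.sq_sqrt (sub_nonneg.2 hu)
  -- Cauchy–Schwarz for `(α, 1)` and `(u, √(c² − u²))`, a vector of length `c`.
  calc α * u + √(c ^ 2 - u ^ 2) ≤ √(c ^ 2 * (1 + α ^ 2)) :=
        Real.le_sqrt_of_sq_le (by nlinarith [sq_nonneg (α * √(c ^ 2 - u ^ 2) - u)])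
    _ = c * √(1 + α ^ 2) := by rw [Real.sqrt_mul (sq_nonneg c), Real.sqrt_sq hc]

theorem mul_add_sqrt_sq_sub_sq_eq (α : ℝ) {c : ℝ} (hc : 0 ≤ c) :
    α * (c * α / √(1 + α ^ 2)) + √(c ^ 2 - (c * α / √(1 + α ^ 2)) ^ 2) = c * √(1 + α ^ 2) := by
  have hR : 0 < √(1 + α ^ 2) := Real.sqrt_pos.2 (by positivity)
  have hR2 := Real.sq_sqrt (by positivity : (0 : ℝ) ≤ 1 + α ^ 2)
  set R := √(1 + α ^ 2)
  have : c ^ 2 - (c * α / R) ^ 2 = (c / R) ^ 2 := by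
    field_simp
    linear_combination c ^ 2 * hR2
  rw [this, Real.sqrt_sq (by positivity)]
  field_simp
  linear_combination (-c) * hR2

/-- Unlike `ConcaveOn.comp_convexOn`, this only needs `g` concave on some convex set containing
the image `f '' s`, which itself need not be convex. -/
theorem ConcaveOn.comp_convexOn_of_mapsTo {𝕜 E α β : Type*} [Semiring 𝕜] [PartialOrder 𝕜]
    [AddCommMonoid E] [AddCommMonoid α] [PartialOrder α] [AddCommMonoid β] [PartialOrder β]
    [SMul 𝕜 E] [SMul 𝕜 α] [SMul 𝕜 β] {s : Set E} {t : Set β} {f : E → β} {g : β → α}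
    (hg : ConcaveOn 𝕜 t g) (hf : ConvexOn 𝕜 s f) (hg' : AntitoneOn g t) (hst : MapsTo f s t) :
    ConcaveOn 𝕜 s (g ∘ f) :=
  ⟨hf.1, fun _ hx _ hy _ _ ha hb hab =>
    (hg.2 (hst hx) (hst hy) ha hb hab).trans <|
      hg' (hst (hf.1 hx hy ha hb hab)) (hg.1 (hst hx) (hst hy) ha hb hab) (hf.2 hx hy ha hb hab)⟩

section Finite

variable {X : Type*} [Fintype X]

theorem convexOn_sum_abs : ConvexOn ℝ univ (fun l : X → ℝ => ∑ x, |l x|) := by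
  refine ⟨convex_univ, fun l _ m _ a b ha hb _ => ?_⟩
  simp only [smul_eq_mul, Pi.add_apply, Pi.smul_apply, mul_sum, ← sum_add_distrib]
  gcongr with x
  exact (abs_add_le _ _).trans_eq (by rw [abs_mul, abs_mul, abs_of_nonneg ha, abs_of_nonneg hb])

theorem convex_sum_eq_zero_inter_sum_abs_le (r : ℝ) :
    Convex ℝ {l : X → ℝ | ∑ x, l x = 0 ∧ ∑ x, |l x| ≤ r} := by
  have hsum : IsLinearMap ℝ fun l : X → ℝ => ∑ x, l x :=
    ⟨fun _ _ => sum_add_distrib, fun _ _ => (mul_sum _ _ _).symm⟩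
  have h := (convex_hyperplane hsum 0).inter (convexOn_sum_abs.convex_le r)
  rwa [sep_univ, ← ofPred_and] at h

theorem sum_mul_le_of_sum_eq_zero {l f : X → ℝ} {m M : ℝ} (hl : ∑ x, l x = 0)
    (hm : ∀ x, m ≤ f x) (hM : ∀ x, f x ≤ M) :
    ∑ x, l x * f x ≤ (∑ x, |l x|) * (M - m) / 2 := by
  calc ∑ x, l x * f x = ∑ x, l x * (f x - (M + m) / 2) := by
        simp only [mul_sub, sum_sub_distrib, ← sum_mul, hl, zero_mul, sub_zero]
    _ ≤ ∑ x, |l x| * ((M - m) / 2) := by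
      refine sum_le_sum fun x _ => (le_abs_self _).trans ?_
      rw [abs_mul]
      gcongr
      exact abs_sub_le_iff.2 ⟨by linarith [hM x, hm x], by linarith [hM x, hm x]⟩
    _ = (∑ x, |l x|) * (M - m) / 2 := by rw [← sum_mul]; ring

variable {c0 c1 : ℝ}

theorem convexOn_neg_sqrt_sub_sum_abs_sq (hc0 : 0 ≤ c0) (hc1 : 0 < c1) :
    ConvexOn ℝ {l : X → ℝ | ∑ x, l x = 0 ∧ ∑ x, |l x| ≤ 2 * c0 * c1}
      (fun l => -√(c0 ^ 2 - (∑ x, |l x|) ^ 2 / (4 * c1 ^ 2))) := by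
  have hN : ConvexOn ℝ {l : X → ℝ | ∑ x, l x = 0 ∧ ∑ x, |l x| ≤ 2 * c0 * c1}
      (fun l => (∑ x, |l x|) / (2 * c1)) :=
    (convexOn_sum_abs.subset (subset_univ _) (convex_sum_eq_zero_inter_sum_abs_le _)).smul
      (inv_nonneg.2 (by positivity : (0 : ℝ) ≤ 2 * c1)) |>.congr fun l _ => inv_mul_eq_div _ _
  have hsemicircle : ConcaveOn ℝ (Icc 0 c0) fun u => √(c0 ^ 2 - u ^ 2) :=
    (concaveOn_sqrt_sq_sub_sq c0).subset (Icc_subset_Icc_left (neg_nonpos.2 hc0)) (convex_Icc 0 c0)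
  have := hsemicircle.comp_convexOn_of_mapsTo hN
    ((antitoneOn_sqrt_sq_sub_sq c0).mono Icc_subset_Ici_self)
    fun l hl => ⟨by positivity, div_le_of_le_mul₀ (by positivity) hc0 (by linarith [hl.2])⟩
  refine (neg_convexOn_iff.2 this).congr fun l _ => ?_
  simp only [Pi.neg_apply, Function.comp_apply, div_pow, mul_pow]
  norm_num

theorem sum_mul_add_sqrt_le (hc0 : 0 ≤ c0) (hc1 : 0 < c1) {l f : X → ℝ} {m M : ℝ}
    (hm : ∀ x, m ≤ f x) (hM : ∀ x, f x ≤ M) (hl : ∑ x, l x = 0)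
    (hlr : ∑ x, |l x| ≤ 2 * c0 * c1) :
    ∑ x, l x * f x + √(c0 ^ 2 - (∑ x, |l x|) ^ 2 / (4 * c1 ^ 2))
      ≤ c0 * √(1 + c1 ^ 2 * (M - m) ^ 2) := by
  set u := (∑ x, |l x|) / (2 * c1)
  have hNu : ∑ x, |l x| = 2 * c1 * u := (mul_div_cancel₀ _ (by positivity)).symm
  have hu0 : 0 ≤ u := by positivity
  have huc : u ≤ c0 := by rw [div_le_iff₀ (by positivity)]; linarith
  calc ∑ x, l x * f x + √(c0 ^ 2 - (∑ x, |l x|) ^ 2 / (4 * c1 ^ 2))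
      = ∑ x, l x * f x + √(c0 ^ 2 - u ^ 2) := by rw [hNu]; field_simp; ring_nf
    _ ≤ c1 * (M - m) * u + √(c0 ^ 2 - u ^ 2) := by
      gcongr
      exact (sum_mul_le_of_sum_eq_zero hl hm hM).trans_eq (by rw [hNu]; ring)
    _ ≤ c0 * √(1 + (c1 * (M - m)) ^ 2) :=
        mul_add_sqrt_sq_sub_sq_le _ hc0 (pow_le_pow_left₀ hu0 huc 2)
    _ = c0 * √(1 + c1 ^ 2 * (M - m) ^ 2) := by rw [mul_pow]

variable [DecidableEq X]

theorem sum_single_sub_single (a b : X) (r : ℝ) :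
    ∑ x, (Pi.single a r - Pi.single b r : X → ℝ) x = 0 := by
  simp [sum_sub_distrib]

theorem sum_single_sub_single_mul (a b : X) (r : ℝ) (f : X → ℝ) :
    ∑ x, (Pi.single a r - Pi.single b r : X → ℝ) x * f x = r * (f a - f b) := by
  simp [sub_mul, sum_sub_distrib, Pi.single_apply, mul_sub]

theorem sum_abs_single_sub_single_le (a b : X) (r : ℝ) :
    ∑ x, |(Pi.single a r - Pi.single b r : X → ℝ) x| ≤ 2 * |r| := by
  calc ∑ x, |(Pi.single a r - Pi.single b r : X → ℝ) x|
      ≤ ∑ x, (|(Pi.single a r : X → ℝ) x| + |(Pi.single b r : X → ℝ) x|) :=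
        sum_le_sum fun x _ => abs_sub _ _
    _ = 2 * |r| := by
      rw [sum_add_distrib]
      simp only [Pi.single_apply, apply_ite, abs_zero, sum_ite_eq', Finset.mem_univ, if_true]
      ring

theorem exists_le_sum_mul_add_sqrt (hc0 : 0 ≤ c0) (hc1 : 0 < c1) (f : X → ℝ)
    {a b : X} (hab : f b ≤ f a) :
    ∃ l : X → ℝ, ∑ x, l x = 0 ∧ ∑ x, |l x| ≤ 2 * c0 * c1 ∧
      c0 * √(1 + c1 ^ 2 * (f a - f b) ^ 2)
        ≤ ∑ x, l x * f x + √(c0 ^ 2 - (∑ x, |l x|) ^ 2 / (4 * c1 ^ 2)) := by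
  set α := c1 * (f a - f b)
  have hα : 0 ≤ α := mul_nonneg hc1.le (sub_nonneg.2 hab)
  set u := c0 * α / √(1 + α ^ 2)
  have hu0 : 0 ≤ u := by positivity
  have huc : u ≤ c0 := by
    have hαR : α ≤ √(1 + α ^ 2) := Real.le_sqrt_of_sq_le (by linarith)
    exact div_le_of_le_mul₀ (Real.sqrt_nonneg _) hc0 (by gcongr)
  have hlu := sum_abs_single_sub_single_le a b (c1 * u)
  rw [abs_of_nonneg (by positivity)] at hlu
  refine ⟨Pi.single a (c1 * u) - Pi.single b (c1 * u), sum_single_sub_single a b _, ?_, ?_⟩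
  · nlinarith
  · have hN0 : 0 ≤ ∑ x, |(Pi.single a (c1 * u) - Pi.single b (c1 * u) : X → ℝ) x| :=
      sum_nonneg fun _ _ => abs_nonneg _
    -- `‖l‖₁ = N` may be smaller than `2 c₁ u` (it is `0` when `a = b`); this only helps, since
    -- the semicircle decreases.
    generalize ∑ x, |(Pi.single a (c1 * u) - Pi.single b (c1 * u) : X → ℝ) x| = N at hN0 hlu ⊢
    rw [sum_single_sub_single_mul]
    calc c0 * √(1 + c1 ^ 2 * (f a - f b) ^ 2) = α * u + √(c0 ^ 2 - u ^ 2) := by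
          rw [← mul_pow]; exact (mul_add_sqrt_sq_sub_sq_eq α hc0).symm
      _ ≤ α * u + √(c0 ^ 2 - (N / (2 * c1)) ^ 2) := by
          gcongr
          exact div_le_of_le_mul₀ (by positivity) hu0 (by linarith)
      _ = c1 * u * (f a - f b) + √(c0 ^ 2 - N ^ 2 / (4 * c1 ^ 2)) := by
          simp only [α, div_pow]; ring_nf

end Finite

/-- the function `E(λ) = −√(c₀² − ‖λ‖₁²/(4c₁²))` on the domain
`{λ : ∑_x λ(x) = 0, ‖λ‖₁ ≤ 2c₀c₁}` (and `+∞` outside it) is convex, and its Fenchel conjugate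
is `E*(f) = c₀·√(1 + c₁²·(max f − min f)²)`. -/
theorem stmt_14 {X : Type*} [Fintype X] [Nonempty X]
    (c0 c1 : ℝ) (hc0 : 0 ≤ c0) (hc1 : 0 < c1) :
    ConvexOn ℝ
      {l : X → ℝ | (∑ x : X, l x) = 0 ∧ (∑ x : X, |l x|) ≤ 2 * c0 * c1}
      (fun l => -Real.sqrt (c0 ^ 2 - (∑ x : X, |l x|) ^ 2 / (4 * c1 ^ 2))) ∧
    ∀ f : X → ℝ,
      sSup {z : ℝ | ∃ l : X → ℝ, (∑ x : X, l x) = 0 ∧ (∑ x : X, |l x|) ≤ 2 * c0 * c1 ∧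
          z = (∑ x : X, l x * f x) +
            Real.sqrt (c0 ^ 2 - (∑ x : X, |l x|) ^ 2 / (4 * c1 ^ 2))} =
        c0 * Real.sqrt (1 + c1 ^ 2 *
          (Finset.univ.sup' Finset.univ_nonempty f -
            Finset.univ.inf' Finset.univ_nonempty f) ^ 2) := by
  classical
  refine ⟨convexOn_neg_sqrt_sub_sum_abs_sq hc0 hc1, fun f => ?_⟩
  obtain ⟨a, -, ha⟩ := exists_mem_eq_sup' univ_nonempty f
  obtain ⟨b, -, hb⟩ := exists_mem_eq_inf' univ_nonempty f
  have hm : ∀ x, f b ≤ f x := fun x => hb ▸ inf'_le f (Finset.mem_univ x)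
  have hM : ∀ x, f x ≤ f a := fun x => ha ▸ le_sup' f (Finset.mem_univ x)
  obtain ⟨l, hl, hlr, hge⟩ := exists_le_sum_mul_add_sqrt hc0 hc1 f (hm a)
  rw [ha, hb]
  refine IsGreatest.csSup_eq
    ⟨⟨l, hl, hlr, le_antisymm hge (sum_mul_add_sqrt_le hc0 hc1 hm hM hl hlr)⟩, ?_⟩
  rintro z ⟨l, hl, hlr, rfl⟩
  exact sum_mul_add_sqrt_le hc0 hc1 hm hM hl hlr
end
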